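/- Let q ≥ 2 and N ≥ 1 be integers, let X = {0,...,q-1}^N, and let L : X → ℝ be a non-negative loss function. Let R_te := q^{-N} · Σ_{x ∈ X} L(x) be the risk under the uniform distribution on X, and let R_tr be the training risk, i.e., the expectation of L under an arbitrary probability distribution P_tr on X. Suppose the average of L over the set of zero-free inputs {x ∈ X : x_i ≠ 0 for all i} is at least ε ≥ 0, and R_tr ≤ δ. Then R_te − R_tr ≥ ε·(1 − 1/q)^N − δ. -/
import Mathlib


open Finset

/-- Generalization gap under sparse training: if the average loss over zero-free
inputs is at least `ε` and the training risk is at most `δ`, then the test risk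
minus the training risk is at least `ε (1 - 1/q)^N - δ`. -/
theorem stmt_0 (N q : ℕ) (hN : 1 ≤ N) (hq : 2 ≤ q)
    (L : (Fin N → Fin q) → ℝ) (hL : ∀ x, 0 ≤ L x)
    (Ptr : (Fin N → Fin q) → ℝ) (hPtr : ∀ x, 0 ≤ Ptr x)
    (hPtrsum : ∑ x, Ptr x = 1)
    (ε δ : ℝ) (hε : 0 ≤ ε)
    (havg : ε ≤ (∑ x ∈ univ.filter (fun x : Fin N → Fin q => ∀ i, (x i : ℕ) ≠ 0), L x)
      / ((q : ℝ) - 1) ^ N)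
    (htr : ∑ x, Ptr x * L x ≤ δ) :
    ε * (1 - 1 / (q : ℝ)) ^ N - δ ≤
      (∑ x, L x) / (q : ℝ) ^ N - ∑ x, Ptr x * L x := by
  have hq1 : (1 : ℝ) ≤ (q : ℝ) - 1 := by
    have : (2 : ℝ) ≤ (q : ℝ) := by exact_mod_cast hq
    linarith
  have hqm1pos : (0 : ℝ) < ((q : ℝ) - 1) ^ N := by positivity
  have hqpos : (0 : ℝ) < (q : ℝ) ^ N := by
    have : (0 : ℝ) < (q : ℝ) := by positivity
    positivity
  have hS : ε * ((q : ℝ) - 1) ^ N ≤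
      ∑ x ∈ univ.filter (fun x : Fin N → Fin q => ∀ i, (x i : ℕ) ≠ 0), L x := by
    rw [← le_div_iff₀ hqm1pos]; exact havg
  have hSle : (∑ x ∈ univ.filter (fun x : Fin N → Fin q => ∀ i, (x i : ℕ) ≠ 0), L x)
      ≤ ∑ x, L x := Finset.sum_le_sum_of_subset_of_nonneg (Finset.filter_subset _ _)
      (fun x _ _ => hL x)
  have hkey : ε * (1 - 1 / (q : ℝ)) ^ N ≤ (∑ x, L x) / (q : ℝ) ^ N := by
    have hqne : (q : ℝ) ≠ 0 := by positivity
    have h1 : (1 - 1 / (q : ℝ)) ^ N = ((q : ℝ) - 1) ^ N / (q : ℝ) ^ N := by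
      rw [← div_pow]; congr 1; field_simp
    rw [h1, ← mul_div_assoc, div_le_div_iff₀ hqpos hqpos]
    have := hS.trans hSle
    nlinarith
  linarith
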